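/- Let X ⊆ ℝ^ℓ and Y ⊆ ℝ^m be open sets with ℓ < n, and let F : X × Y → ℝ^n be a C¹ function such that 0 is a regular value of F (i.e., the total derivative DF(x,y) is surjective at every point (x,y) with F(x,y) = 0). Then for Lebesgue almost every y ∈ Y, the set {x ∈ X : F(x,y) = 0} is empty. -/

import Mathlib

/-!
Near a zero `p`, the implicit function theorem exhibits the zero set of `F` as a Lipschitz image of
a neighbourhood of `0` in `ker DF(p)`, which has dimension `ℓ + m - n`; so the whole zero set has
Hausdorff dimension at most `ℓ + m - n`. The parameters `y` with a nonempty slice form its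
projection to `Y`, again of Hausdorff dimension `≤ ℓ + m - n < m`, hence Lebesgue-null.
-/

open MeasureTheory Module Filter Topology Set
open scoped ENNReal

theorem MeasureTheory.Measure.addHaar_null_of_dimH_lt_finrank {E : Type*} [NormedAddCommGroup E]
    [NormedSpace ℝ E] [FiniteDimensional ℝ E] [MeasurableSpace E] [BorelSpace E]
    (μ : Measure E) [μ.IsAddHaarMeasure] {s : Set E} (hs : dimH s < finrank ℝ E) : μ s = 0 :=
  measure_zero_of_dimH_lt (d := finrank ℝ E)
    (by simpa using absolutelyContinuous_isAddHaarMeasure μ μH[finrank ℝ E]) (by simpa using hs)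

theorem dimH_le_of_forall_exists_mem_nhdsWithin {X : Type*} [EMetricSpace X]
    [SecondCountableTopology X] {s : Set X} {d : ℝ≥0∞}
    (h : ∀ x ∈ s, ∃ t ∈ 𝓝[s] x, dimH t ≤ d) : dimH s ≤ d := by
  by_contra! hd
  obtain ⟨x, hx, hlt⟩ := exists_mem_nhdsWithin_lt_dimH_of_lt_dimH hd
  obtain ⟨t, ht, htd⟩ := h x hx
  exact (hlt t ht).not_ge htd

section LevelSet

variable {E F : Type*} [NormedAddCommGroup E] [NormedSpace ℝ E] [FiniteDimensional ℝ E]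
  [NormedAddCommGroup F] [NormedSpace ℝ F]

theorem ContinuousLinearMap.finrank_ker_of_range_eq_top {f' : E →L[ℝ] F}
    (hf' : f'.range = ⊤) : finrank ℝ f'.ker = finrank ℝ E - finrank ℝ F := by
  have := LinearMap.finrank_range_add_finrank_ker (f' : E →ₗ[ℝ] F)
  rw [hf', finrank_top] at this
  omega

variable [FiniteDimensional ℝ F]

theorem HasStrictFDerivAt.exists_dimH_preimage_singleton_inter_le {f : E → F} {f' : E →L[ℝ] F}
    {a : E} (hf : HasStrictFDerivAt f f' a) (hf' : f'.range = ⊤) :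
    ∃ U ∈ 𝓝 a, dimH (f ⁻¹' {f a} ∩ U) ≤ (finrank ℝ E - finrank ℝ F : ℕ) := by
  set φ := hf.implicitToOpenPartialHomeomorph f f' hf'
  set g := hf.implicitFunction f f' hf' (f a)
  obtain ⟨K, t, ht, hg⟩ := (hf.to_implicitFunction hf').exists_lipschitzOnWith
  have hφt : ∀ᶠ x in 𝓝 a, (φ x).2 ∈ t := by
    have hφ : ContinuousAt (fun x => (φ x).2) a :=
      continuous_snd.continuousAt.comp
        (φ.continuousAt (hf.mem_implicitToOpenPartialHomeomorph_source hf'))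
    have hφa : (φ a).2 = 0 := by simp [φ]
    exact hφ.preimage_mem_nhds (hφa ▸ ht)
  obtain ⟨U, hU, hUg⟩ := ((hf.eq_implicitFunction hf').and hφt).exists_mem
  refine ⟨U, hU, ?_⟩
  have hsub : f ⁻¹' {f a} ∩ U ⊆ g '' t := by
    rintro x ⟨hx, hxU⟩
    obtain ⟨hgx, hxt⟩ := hUg x hxU
    exact ⟨(φ x).2, hxt, by rwa [show f x = f a from hx] at hgx⟩
  calc dimH (f ⁻¹' {f a} ∩ U) ≤ dimH (g '' t) := dimH_mono hsub
    _ ≤ dimH t := hg.dimH_image_le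
    _ ≤ dimH (univ : Set f'.ker) := dimH_mono (subset_univ t)
    _ = _ := by rw [Real.dimH_univ_eq_finrank, ContinuousLinearMap.finrank_ker_of_range_eq_top hf']

theorem dimH_inter_preimage_singleton_le_of_surjective_fderiv {f : E → F} {U : Set E} {c : F}
    (hU : IsOpen U) (hf : ContDiffOn ℝ 1 f U)
    (hreg : ∀ x ∈ U, f x = c → Function.Surjective (fderiv ℝ f x)) :
    dimH (U ∩ f ⁻¹' {c}) ≤ (finrank ℝ E - finrank ℝ F : ℕ) := by
  refine dimH_le_of_forall_exists_mem_nhdsWithin fun x ⟨hxU, hx⟩ => ?_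
  have hsd : HasStrictFDerivAt f (fderiv ℝ f x) x :=
    (hf.contDiffAt (hU.mem_nhds hxU)).hasStrictFDerivAt one_ne_zero
  obtain ⟨V, hV, hdim⟩ :=
    hsd.exists_dimH_preimage_singleton_inter_le (LinearMap.range_eq_top.2 (hreg x hxU hx))
  refine ⟨_, inter_mem_nhdsWithin _ hV, (dimH_mono ?_).trans hdim⟩
  rintro y ⟨⟨-, hy⟩, hyV⟩
  exact ⟨hy.trans hx.symm, hyV⟩

end LevelSet

/-- Parametric transversality theorem: if `0` is a regular value of the C¹ map
`F : X × Y → ℝⁿ` with `dim X = ℓ < n`, then for a.e. parameter `y ∈ Y` the slice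
`{x ∈ X : F(x,y) = 0}` is empty. -/
theorem stmt0 {ℓ m n : ℕ} (hn : ℓ < n)
    (X : Set (EuclideanSpace ℝ (Fin ℓ))) (Y : Set (EuclideanSpace ℝ (Fin m)))
    (hX : IsOpen X) (hY : IsOpen Y)
    (F : EuclideanSpace ℝ (Fin ℓ) × EuclideanSpace ℝ (Fin m) → EuclideanSpace ℝ (Fin n))
    (hF : ContDiffOn ℝ 1 F (X ×ˢ Y))
    (hreg : ∀ p ∈ X ×ˢ Y, F p = 0 → Function.Surjective (fderivWithin ℝ F (X ×ˢ Y) p)) :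
    ∀ᵐ y ∂(volume : Measure (EuclideanSpace ℝ (Fin m))),
      y ∈ Y → ∀ x ∈ X, F (x, y) ≠ 0 := by
  have hXY : IsOpen (X ×ˢ Y) := hX.prod hY
  have hreg' : ∀ p ∈ X ×ˢ Y, F p = 0 → Function.Surjective (fderiv ℝ F p) := by
    intro p hp hp0
    rw [← fderivWithin_of_isOpen hXY hp]
    exact hreg p hp hp0
  set Z := X ×ˢ Y ∩ F ⁻¹' {0}
  have hbad : {y : EuclideanSpace ℝ (Fin m) | ¬(y ∈ Y → ∀ x ∈ X, F (x, y) ≠ 0)} ⊆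
      Prod.snd '' Z := by
    intro y hy
    simp only [not_forall, not_not] at hy
    obtain ⟨hyY, x, hxX, hx0⟩ := hy
    exact ⟨(x, y), ⟨⟨hxX, hyY⟩, hx0⟩, rfl⟩
  rw [ae_iff]
  refine measure_mono_null hbad ?_
  rcases Z.eq_empty_or_nonempty with hZ | ⟨p, hpXY, hp0⟩
  · simp [hZ]
  -- with truncated subtraction, `ℓ + m - n < m` fails for `m = 0` unless `n ≤ ℓ + m`
  have hnm : n ≤ ℓ + m := by
    simpa using LinearMap.finrank_le_finrank_of_surjective (hreg' p hpXY hp0)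
  refine Measure.addHaar_null_of_dimH_lt_finrank _ ?_
  calc dimH (Prod.snd '' Z) ≤ dimH Z := LipschitzWith.prod_snd.dimH_image_le Z
    _ ≤ (ℓ + m - n : ℕ) := by
      simpa using dimH_inter_preimage_singleton_le_of_surjective_fderiv hXY hF hreg'
    _ < finrank ℝ (EuclideanSpace ℝ (Fin m)) := by
      rw [finrank_euclideanSpace_fin]
      exact_mod_cast (by omega)
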